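/- Let x be a string not containing the symbol 7 and let y = 7^{|x|} ++ y2 ++ 7^{|x|} where y2 also does not contain the symbol 7. Then δ(x,y) = 2|x| + min over all ways of writing x = x1 ++ x2 ++ x3 of δ(x2, y2). -/

import Mathlib

/-! Levenshtein distance, as it stood in Mathlib (Mathlib/Data/List/EditDistance/Defs.lean),
which has since been removed from Mathlib. -/

section Levenshtein

variable {α β δ : Type*} [AddZeroClass δ] [Min δ]

namespace Levenshtein

/-- A cost function for Levenshtein distance. -/
structure Cost (α β δ : Type*) where
  /-- Cost to delete an element from a list. -/
  delete : α → δ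
  /-- Cost in insert an element into a list. -/
  insert : β → δ
  /-- Cost to substitute one element for another in a list. -/
  substitute : α → β → δ

/-- The default cost structure, for which the cost is `1` for any operation. -/
def defaultCost [DecidableEq α] : Cost α α ℕ where
  delete _ := 1
  insert _ := 1
  substitute a b := if a = b then 0 else 1

variable (C : Cost α β δ)

/-- (Implementation detail) -/
def impl
    (xs : List α) (y : β) (d : {r : List δ // 0 < r.length}) : {r : List δ // 0 < r.length} :=
  let ⟨ds, w⟩ := d
  xs.zip (ds.zip ds.tail) |>.foldr
    (init := ⟨[ds.getLast (List.length_pos_iff.mp w) + C.insert y], by simp⟩)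
    (fun ⟨x, d₀, d₁⟩ ⟨r, w⟩ =>
      ⟨min (C.delete x + r[0]) (min (C.insert y + d₀) (C.substitute x y + d₁)) :: r, by simp⟩)

end Levenshtein

open Levenshtein

variable (C : Levenshtein.Cost α β δ)

/-- `suffixLevenshtein C xs ys` computes the Levenshtein distance
(using the cost functions provided by a `C : Cost α β δ`)
from each suffix of the list `xs` to the list `ys`. -/
def suffixLevenshtein (xs : List α) (ys : List β) : {r : List δ // 0 < r.length} :=
  ys.foldr
    (impl C xs)
    (xs.foldr (init := ⟨[0], by simp⟩) (fun a ⟨r, w⟩ => ⟨(C.delete a + r[0]) :: r, by simp⟩))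

/-- `levenshtein C xs ys` computes the Levenshtein distance
(using the cost functions provided by a `C : Cost α β δ`)
from the list `xs` to the list `ys`. -/
def levenshtein (xs : List α) (ys : List β) : δ :=
  let ⟨r, w⟩ := suffixLevenshtein C xs ys
  r[0]

end Levenshtein

/-- Unit-cost edit distance between two lists over a decidable-eq alphabet. -/
def editDist (a b : List ℕ) : ℕ :=
  levenshtein Levenshtein.defaultCost a b


/-! Aligning `x` against a concatenation `u ++ v` cuts `x` into a part aligned against `u` and a
part aligned against `v`, so the edit distance to `u ++ v` is the least value of
`δ(a, u) + δ(b, v)` over the splittings `x = a ++ b`. Against a block `7^n` with `n ≥ |a|` and no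
`7` in `a`, every `7` must be inserted or substituted, so the cost is exactly `n`. Splitting `x`
twice, against the blocks of `7^|x| ++ y2 ++ 7^|x|`, gives the formula. -/

open Levenshtein

section Recursion

variable {α β δ : Type*} [AddZeroClass δ] [Min δ] {C : Cost α β δ}

theorem Levenshtein.impl_cons (x : α) (xs : List α) (y : β) (d : δ) (ds : List δ)
    (w : 0 < (d :: ds).length) (w' : 0 < ds.length) :
    impl C (x :: xs) y ⟨d :: ds, w⟩ =
      let ⟨r, w⟩ := impl C xs y ⟨ds, w'⟩
      ⟨min (C.delete x + r[0]) (min (C.insert y + d) (C.substitute x y + ds[0])) :: r, by simp⟩ :=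
  match ds, w' with | _ :: _, _ => rfl

theorem Levenshtein.impl_length (xs : List α) (y : β) (d : {r : List δ // 0 < r.length})
    (w : d.1.length = xs.length + 1) :
    (impl C xs y d).1.length = xs.length + 1 := by
  induction xs generalizing d with
  | nil => rfl
  | cons x xs ih =>
    dsimp [impl]
    match d, w with
    | ⟨_ :: d₂ :: ds, _⟩, w =>
      dsimp
      congr 1
      exact ih ⟨d₂ :: ds, by simp⟩ (by simpa using w)

theorem suffixLevenshtein_length (xs : List α) (ys : List β) :
    (suffixLevenshtein C xs ys).1.length = xs.length + 1 := by
  induction ys with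
  | nil => induction xs <;> simp_all [suffixLevenshtein]
  | cons y ys ih => exact Levenshtein.impl_length _ _ _ ih

theorem suffixLevenshtein_cons₁ (x : α) (xs : List α) (ys : List β) :
    suffixLevenshtein C (x :: xs) ys =
      ⟨levenshtein C (x :: xs) ys :: (suffixLevenshtein C xs ys).1, by simp⟩ := by
  have ext_head_tail : ∀ {l m : {r : List δ // 0 < r.length}},
      l.1[0]'l.2 = m.1[0]'m.2 → l.1.tail = m.1.tail → l = m := by
    intro l m
    match l, m with
    | ⟨_ :: _, _⟩, ⟨_ :: _, _⟩ => simp_all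
  induction ys with
  | nil => rfl
  | cons y ys ih =>
    apply ext_head_tail
    · rfl
    show (impl C (x :: xs) y (suffixLevenshtein C (x :: xs) ys)).1.tail = _
    rw [ih, Levenshtein.impl_cons (w' := by simp [suffixLevenshtein_length])]
    rfl

@[simp] theorem levenshtein_nil_nil : levenshtein C [] [] = 0 := rfl

@[simp] theorem levenshtein_nil_cons (y : β) (ys : List β) :
    levenshtein C [] (y :: ys) = levenshtein C [] ys + C.insert y := by
  have key : ∀ (s : {r : List δ // 0 < r.length}) (_ : s.1.length = 1) w,
      (impl C [] y s).1[0]'w = s.1[0]'s.2 + C.insert y := by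
    rintro ⟨_ | ⟨a, _ | _⟩, w⟩ hs _ <;> simp_all [impl]
  exact key _ (suffixLevenshtein_length [] ys) _

@[simp] theorem levenshtein_cons_nil (x : α) (xs : List α) :
    levenshtein C (x :: xs) [] = C.delete x + levenshtein C xs [] :=
  rfl

@[simp] theorem levenshtein_cons_cons (x : α) (xs : List α) (y : β) (ys : List β) :
    levenshtein C (x :: xs) (y :: ys) =
      min (C.delete x + levenshtein C xs (y :: ys))
        (min (C.insert y + levenshtein C (x :: xs) ys)
          (C.substitute x y + levenshtein C xs ys)) := by
  have key : ∀ (s t : {r : List δ // 0 < r.length})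
      (_ : t = ⟨levenshtein C (x :: xs) ys :: s.1, by simp⟩) w₂ w₃,
      (impl C (x :: xs) y t).1[0]'w₂ =
        min (C.delete x + (impl C xs y s).1[0]'w₃)
          (min (C.insert y + levenshtein C (x :: xs) ys) (C.substitute x y + s.1[0]'s.2)) := by
    rintro ⟨r, w⟩ t rfl _ _
    match r, w with
    | _ :: _, _ => rfl
  exact key (suffixLevenshtein C xs ys) _ (suffixLevenshtein_cons₁ x xs ys) _
    (by rw [Levenshtein.impl_length _ _ _ (suffixLevenshtein_length xs ys)]; omega)

end Recursion

section OrderedCost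

variable {α β δ : Type*} [AddCommMonoid δ] [LinearOrder δ] {C : Cost α β δ}

theorem levenshtein_cons_le_delete (x : α) (xs : List α) (ys : List β) :
    levenshtein C (x :: xs) ys ≤ C.delete x + levenshtein C xs ys := by
  cases ys with
  | nil => exact le_rfl
  | cons y ys => simp

theorem levenshtein_cons_le_insert (xs : List α) (y : β) (ys : List β) :
    levenshtein C xs (y :: ys) ≤ C.insert y + levenshtein C xs ys := by
  cases xs with
  | nil => simp [add_comm]
  | cons x xs => simp

theorem levenshtein_cons_cons_le_substitute (x : α) (xs : List α) (y : β) (ys : List β) :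
    levenshtein C (x :: xs) (y :: ys) ≤ C.substitute x y + levenshtein C xs ys := by
  simp

variable [IsOrderedAddMonoid δ]

theorem levenshtein_append_append_le (a b : List α) (u v : List β) :
    levenshtein C (a ++ b) (u ++ v) ≤ levenshtein C a u + levenshtein C b v := by
  induction a generalizing u with
  | nil =>
    induction u with
    | nil => simp
    | cons y ys ih =>
      calc levenshtein C b (y :: (ys ++ v))
          ≤ C.insert y + (levenshtein C [] ys + levenshtein C b v) :=
            (levenshtein_cons_le_insert ..).trans (by gcongr; exact ih)
        _ = levenshtein C [] (y :: ys) + levenshtein C b v := by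
            rw [levenshtein_nil_cons]; abel
  | cons x xs ihx =>
    induction u with
    | nil =>
      calc levenshtein C (x :: (xs ++ b)) v
          ≤ C.delete x + (levenshtein C xs [] + levenshtein C b v) :=
            (levenshtein_cons_le_delete ..).trans (by gcongr; exact ihx [])
        _ = levenshtein C (x :: xs) [] + levenshtein C b v := by
            rw [levenshtein_cons_nil, add_assoc]
    | cons y ys ihy =>
      rw [levenshtein_cons_cons x xs y ys, ← min_add_add_right, ← min_add_add_right]
      simp only [le_min_iff, add_assoc, List.cons_append]
      refine ⟨?_, ?_, ?_⟩
      · exact (levenshtein_cons_le_delete ..).trans (add_le_add_right (ihx (y :: ys)) _)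
      · exact (levenshtein_cons_le_insert ..).trans (add_le_add_right ihy _)
      · exact (levenshtein_cons_cons_le_substitute ..).trans (add_le_add_right (ihx ys) _)

theorem exists_append_levenshtein_add_le (x : List α) (u v : List β) :
    ∃ a b, x = a ++ b ∧ levenshtein C a u + levenshtein C b v ≤ levenshtein C x (u ++ v) := by
  induction u generalizing x with
  | nil => exact ⟨[], x, rfl, by simp⟩
  | cons y ys ihu =>
    induction x with
    | nil =>
      obtain ⟨a, b, hab, hle⟩ := ihu []
      obtain ⟨rfl, rfl⟩ := List.append_eq_nil_iff.mp hab.symm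
      refine ⟨[], [], rfl, ?_⟩
      calc levenshtein C [] (y :: ys) + levenshtein C [] v
          = C.insert y + (levenshtein C [] ys + levenshtein C [] v) := by
            rw [levenshtein_nil_cons]; abel
        _ ≤ levenshtein C [] (y :: ys ++ v) := by
            rw [List.cons_append, levenshtein_nil_cons, add_comm]; gcongr
    | cons z zs ihx =>
      rw [List.cons_append, levenshtein_cons_cons]
      let P t := ∃ a b, z :: zs = a ++ b ∧ levenshtein C a (y :: ys) + levenshtein C b v ≤ t
      refine min_rec' P ?_ (min_rec' P ?_ ?_)
      · obtain ⟨a, b, rfl, hle⟩ := ihx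
        rw [List.cons_append] at hle
        refine ⟨z :: a, b, rfl, ?_⟩
        calc _ ≤ C.delete z + levenshtein C a (y :: ys) + levenshtein C b v := by
              gcongr; exact levenshtein_cons_le_delete ..
          _ ≤ _ := by rw [add_assoc]; gcongr
      · obtain ⟨a, b, hab, hle⟩ := ihu (z :: zs)
        refine ⟨a, b, hab, ?_⟩
        calc _ ≤ C.insert y + levenshtein C a ys + levenshtein C b v := by
              gcongr; exact levenshtein_cons_le_insert ..
          _ ≤ _ := by rw [add_assoc]; gcongr
      · obtain ⟨a, b, rfl, hle⟩ := ihu zs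
        refine ⟨z :: a, b, rfl, ?_⟩
        calc _ ≤ C.substitute z y + levenshtein C a ys + levenshtein C b v := by
              gcongr; exact levenshtein_cons_cons_le_substitute ..
          _ ≤ _ := by rw [add_assoc]; gcongr

end OrderedCost

section DefaultCost

variable {α : Type*} [DecidableEq α]

@[simp] theorem Levenshtein.defaultCost_delete (a : α) :
    (defaultCost : Cost α α ℕ).delete a = 1 := rfl

@[simp] theorem Levenshtein.defaultCost_insert (a : α) :
    (defaultCost : Cost α α ℕ).insert a = 1 := rfl

@[simp] theorem Levenshtein.defaultCost_substitute (a b : α) :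
    (defaultCost : Cost α α ℕ).substitute a b = if a = b then 0 else 1 := rfl

@[simp] theorem levenshtein_defaultCost_nil_left (ys : List α) :
    levenshtein defaultCost [] ys = ys.length := by
  induction ys with
  | nil => rfl
  | cons y ys ih => simp [ih]

@[simp] theorem levenshtein_defaultCost_nil_right (xs : List α) :
    levenshtein defaultCost xs [] = xs.length := by
  induction xs with
  | nil => rfl
  | cons x xs ih => simp [ih, add_comm]

theorem levenshtein_defaultCost_le_max (xs ys : List α) :
    levenshtein defaultCost xs ys ≤ max xs.length ys.length := by
  induction xs generalizing ys with
  | nil => simp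
  | cons x xs ih =>
    cases ys with
    | nil => simp [add_comm]
    | cons y ys =>
      have hsub : defaultCost.substitute x y ≤ 1 := by
        simp only [defaultCost_substitute]; split <;> omega
      have hrec := ih ys
      have hstep := levenshtein_cons_cons_le_substitute (C := defaultCost) x xs y ys
      simp only [List.length_cons]
      omega

theorem le_levenshtein_defaultCost_replicate {c : α} (n : ℕ) {xs : List α}
    (hc : ∀ b ∈ xs, b ≠ c) : n ≤ levenshtein defaultCost xs (List.replicate n c) := by
  induction n generalizing xs with
  | zero => exact Nat.zero_le _
  | succ m ihn =>
    induction xs with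
    | nil => simp
    | cons z zs ihz =>
      have hzs : ∀ b ∈ zs, b ≠ c := fun b hb => hc b (List.mem_cons_of_mem z hb)
      have hdel := ihz hzs
      have hins := ihn hc
      have hsub := ihn hzs
      simp only [List.replicate_succ, levenshtein_cons_cons, defaultCost_delete,
        defaultCost_insert, defaultCost_substitute,
        if_neg (hc z List.mem_cons_self)] at *
      omega

theorem levenshtein_defaultCost_replicate {c : α} {n : ℕ} {xs : List α}
    (hc : ∀ b ∈ xs, b ≠ c) (hn : xs.length ≤ n) :
    levenshtein defaultCost xs (List.replicate n c) = n :=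
  le_antisymm ((levenshtein_defaultCost_le_max _ _).trans (by simpa using hn))
    (le_levenshtein_defaultCost_replicate n hc)

end DefaultCost

theorem editDist_padded_eq_two_len_add_min_general
    (x y2 : List ℕ)
    (hx : ∀ c ∈ x, c ≠ 7) :
    editDist x (List.replicate x.length 7 ++ y2 ++ List.replicate x.length 7) =
      2 * x.length +
        sInf { c : ℕ | ∃ x1 x2 x3 : List ℕ, x = x1 ++ x2 ++ x3 ∧
          c = editDist x2 y2 } := by
  unfold editDist
  set R := List.replicate x.length 7
  set S := { c : ℕ | ∃ x1 x2 x3 : List ℕ, x = x1 ++ x2 ++ x3 ∧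
    c = levenshtein defaultCost x2 y2 }
  have hpiece : ∀ {x1 x2 x3}, x = x1 ++ x2 ++ x3 →
      levenshtein defaultCost x1 R = x.length ∧ levenshtein defaultCost x3 R = x.length := by
    rintro x1 x2 x3 rfl
    exact ⟨levenshtein_defaultCost_replicate (fun b hb => hx b (by simp [hb])) (by simp),
      levenshtein_defaultCost_replicate (fun b hb => hx b (by simp [hb])) (by simp; omega)⟩
  apply le_antisymm
  · obtain ⟨x1, x2, x3, hsplit, hc⟩ := Nat.sInf_mem (⟨_, [], [], x, by simp, rfl⟩ : S.Nonempty)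
    calc levenshtein defaultCost x (R ++ y2 ++ R)
        ≤ levenshtein defaultCost (x1 ++ x2) (R ++ y2) + levenshtein defaultCost x3 R := by
          rw [hsplit]; exact levenshtein_append_append_le ..
      _ ≤ levenshtein defaultCost x1 R + levenshtein defaultCost x2 y2 +
            levenshtein defaultCost x3 R := by
          gcongr; exact levenshtein_append_append_le ..
      _ = 2 * x.length + sInf S := by rw [(hpiece hsplit).1, (hpiece hsplit).2, hc]; ring
  · obtain ⟨a, b, rfl, hab⟩ := exists_append_levenshtein_add_le (C := defaultCost) x (R ++ y2) R
    obtain ⟨a1, a2, rfl, ha⟩ := exists_append_levenshtein_add_le (C := defaultCost) a R y2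
    have hinf : sInf S ≤ levenshtein defaultCost a2 y2 := Nat.sInf_le ⟨a1, a2, b, rfl, rfl⟩
    obtain ⟨ha1, hb⟩ := hpiece (x1 := a1) (x2 := a2) (x3 := b) rfl
    omega

/-- If `7` occurs neither in `x` nor in `y2`, and
`y = 7^{|x|} ++ y2 ++ 7^{|x|}`, then
`δ(x,y) = 2|x| + min over x = x1 ++ x2 ++ x3 of δ(x2,y2)`. -/
theorem editDist_padded_eq_two_len_add_min
    (x y2 : List ℕ)
    (hx : ∀ c ∈ x, c ≠ 7) (hy2 : ∀ c ∈ y2, c ≠ 7) :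
    editDist x (List.replicate x.length 7 ++ y2 ++ List.replicate x.length 7) =
      2 * x.length +
        sInf { c : ℕ | ∃ x1 x2 x3 : List ℕ, x = x1 ++ x2 ++ x3 ∧
          c = editDist x2 y2 } :=
  editDist_padded_eq_two_len_add_min_general x y2 hx
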